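/- Let n_F ≥ 1 and let W, l, g, N₀, P_AC be positive, ε ≥ 1, 0 < N_min ≤ N_max, and suppose (p*, n*) maximizes F(p, n) = Σ_{i=1}^{n_F} W · log₂(p_i·l·g·n_i/(W·N₀)) over the feasible set S = {(p, n) : Σ_i p_i ≤ P_max, (max_i n_i)·P_AC + ε·Σ_i p_i + P₀ ≤ P_PG, p_i > 0 for all i, N_min ≤ n_i ≤ N_max for all i}, where S is assumed nonempty. Then p* and n* are constant vectors: p*_i = p*_j and n*_i = n*_j for all subcarriers i, j. -/
import Mathlib


/-- Corollary 1 (chunk-based allocation): any maximizer `(p*, n*)` of the relaxed aggregate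
capacity `F(p, n) = ∑ i, W * log₂ (pᵢ l g nᵢ / (W N₀))` over the feasible set (total transmit
power ≤ `Pmax`, total consumed power `(maxᵢ nᵢ)·P_AC + ε·∑ᵢ pᵢ + P₀ ≤ P_PG`, `pᵢ > 0`,
`Nmin ≤ nᵢ ≤ Nmax`) allocates the same power and the same number of antennas on every
subcarrier. -/
theorem optimal_allocation_constant (nF : ℕ) (hnF : 1 ≤ nF)
    (W l g N₀ PAC Pmax PPG P₀ ε Nmin Nmax : ℝ)
    (hW : 0 < W) (hl : 0 < l) (hg : 0 < g) (hN₀ : 0 < N₀) (hPAC : 0 < PAC)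
    (hε : 1 ≤ ε) (hNmin : 0 < Nmin) (hNN : Nmin ≤ Nmax)
    (S : Set ((Fin nF → ℝ) × (Fin nF → ℝ)))
    (hS : S = {x : (Fin nF → ℝ) × (Fin nF → ℝ) |
      (∑ i, x.1 i) ≤ Pmax ∧
      (Finset.univ.sup' (Finset.univ_nonempty_iff.mpr (Fin.pos_iff_nonempty.mp hnF)) x.2) * PAC
        + ε * (∑ i, x.1 i) + P₀ ≤ PPG ∧
      (∀ i, 0 < x.1 i) ∧
      (∀ i, Nmin ≤ x.2 i ∧ x.2 i ≤ Nmax)})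
    (pstar nstar : Fin nF → ℝ)
    (hmem : (pstar, nstar) ∈ S)
    (hmax : ∀ x ∈ S,
      (∑ i : Fin nF, W * Real.logb 2 (x.1 i * l * g * x.2 i / (W * N₀))) ≤
        ∑ i : Fin nF, W * Real.logb 2 (pstar i * l * g * nstar i / (W * N₀))) :
    ∀ i j : Fin nF, pstar i = pstar j ∧ nstar i = nstar j := by
  have hne : (Finset.univ : Finset (Fin nF)).Nonempty :=
    Finset.univ_nonempty_iff.mpr (Fin.pos_iff_nonempty.mp hnF)
  have h12 : (1:ℝ) < 2 := one_lt_two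
  subst hS
  obtain ⟨hsum, hpg, hpos, hbound⟩ := hmem
  dsimp only at hsum hpg hpos hbound
  set M : ℝ := Finset.univ.sup' hne nstar with hM
  have hMle : ∀ k, nstar k ≤ M := fun k => Finset.le_sup' _ (Finset.mem_univ k)
  obtain ⟨i₀, -, hMi₀⟩ := Finset.exists_mem_eq_sup' hne nstar
  have hNminM : Nmin ≤ M := by rw [hM, hMi₀]; exact (hbound i₀).1
  have hMpos : 0 < M := lt_of_lt_of_le hNmin hNminM
  -- Step 1: nstar is constant equal to M
  have hnconst : ∀ k, nstar k = M := by
    intro k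
    by_contra hk
    have hkM : nstar k < M := lt_of_le_of_ne (hMle k) hk
    -- the point (pstar, const M) is feasible
    have hmem' : (pstar, fun _ : Fin nF => M) ∈
        {x : (Fin nF → ℝ) × (Fin nF → ℝ) |
          (∑ i, x.1 i) ≤ Pmax ∧
          (Finset.univ.sup' (Finset.univ_nonempty_iff.mpr (Fin.pos_iff_nonempty.mp hnF)) x.2) * PAC
            + ε * (∑ i, x.1 i) + P₀ ≤ PPG ∧
          (∀ i, 0 < x.1 i) ∧
          (∀ i, Nmin ≤ x.2 i ∧ x.2 i ≤ Nmax)} := by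
      refine ⟨hsum, ?_, hpos, ?_⟩
      · simpa [Finset.sup'_const] using hpg
      · intro i
        exact ⟨hNminM, Finset.sup'_le hne nstar fun b _ => (hbound b).2⟩
    have hle := hmax _ hmem'
    dsimp only at hle
    have hlt : (∑ i : Fin nF, W * Real.logb 2 (pstar i * l * g * nstar i / (W * N₀))) <
        ∑ i : Fin nF, W * Real.logb 2 (pstar i * l * g * M / (W * N₀)) := by
      refine Finset.sum_lt_sum (fun b _ => ?_) ⟨k, Finset.mem_univ k, ?_⟩
      · have hb1 : 0 < nstar b := hNmin.trans_le (hbound b).1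
        have hp := hpos b
        refine mul_le_mul_of_nonneg_left ?_ hW.le
        refine Real.logb_le_logb_of_le h12 (by positivity) ?_
        have := hMle b
        gcongr
      · have hb1 : 0 < nstar k := hNmin.trans_le (hbound k).1
        have hp := hpos k
        refine mul_lt_mul_of_pos_left ?_ hW
        refine Real.logb_lt_logb h12 (by positivity) ?_
        gcongr
    exact absurd hle (not_le.mpr hlt)
  intro i j
  refine ⟨?_, by rw [hnconst i, hnconst j]⟩
  -- Step 2: pstar is constant
  by_contra hij
  have hne_ij : i ≠ j := fun h => hij (by rw [h])
  set m : ℝ := (pstar i + pstar j) / 2 with hm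
  have hmpos : 0 < m := by have := hpos i; have := hpos j; positivity
  set q : Fin nF → ℝ := fun k =>
    pstar k + (if k = i then m - pstar i else 0) + (if k = j then m - pstar j else 0) with hq
  have hqi : q i = m := by simp [hq, hne_ij]
  have hqj : q j = m := by simp [hq, hne_ij.symm]
  have hqk : ∀ k, k ≠ i → k ≠ j → q k = pstar k := by
    intro k h1 h2; simp [hq, h1, h2]
  have hqpos : ∀ k, 0 < q k := by
    intro k
    by_cases h1 : k = i
    · subst h1; rw [hqi]; exact hmpos
    by_cases h2 : k = j
    · subst h2; rw [hqj]; exact hmpos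
    · rw [hqk k h1 h2]; exact hpos k
  have hqsum : (∑ k, q k) = ∑ k, pstar k := by
    simp only [hq, Finset.sum_add_distrib, Finset.sum_ite_eq' Finset.univ,
      Finset.mem_univ, if_true]
    ring
  have hmem' : (q, nstar) ∈
      {x : (Fin nF → ℝ) × (Fin nF → ℝ) |
        (∑ i, x.1 i) ≤ Pmax ∧
        (Finset.univ.sup' (Finset.univ_nonempty_iff.mpr (Fin.pos_iff_nonempty.mp hnF)) x.2) * PAC
          + ε * (∑ i, x.1 i) + P₀ ≤ PPG ∧
        (∀ i, 0 < x.1 i) ∧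
        (∀ i, Nmin ≤ x.2 i ∧ x.2 i ≤ Nmax)} := by
    refine ⟨?_, ?_, hqpos, hbound⟩
    · rw [hqsum]; exact hsum
    · rw [hqsum]; exact hpg
  have hle := hmax _ hmem'
  dsimp only at hle
  -- decompose each term of the objective
  have hdecomp : ∀ (x : ℝ) (k : Fin nF), 0 < x →
      W * Real.logb 2 (x * l * g * nstar k / (W * N₀)) =
        W * Real.logb 2 x + W * Real.logb 2 (l * g * nstar k / (W * N₀)) := by
    intro x k hx
    have hnk : 0 < nstar k := hNmin.trans_le (hbound k).1
    have harg : x * l * g * nstar k / (W * N₀) = x * (l * g * nstar k / (W * N₀)) := by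
      ring
    rw [harg, Real.logb_mul (ne_of_gt hx) (by positivity), mul_add]
  set A : ℝ := W * Real.logb 2 m - W * Real.logb 2 (pstar i) with hA
  set B : ℝ := W * Real.logb 2 m - W * Real.logb 2 (pstar j) with hB
  have hterm : ∀ k, W * Real.logb 2 (q k * l * g * nstar k / (W * N₀)) =
      W * Real.logb 2 (pstar k * l * g * nstar k / (W * N₀)) +
        ((if k = i then A else 0) + (if k = j then B else 0)) := by
    intro k
    rw [hdecomp _ k (hqpos k), hdecomp _ k (hpos k)]
    by_cases h1 : k = i
    · subst h1; rw [hqi]; simp [hne_ij, hA]; ring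
    by_cases h2 : k = j
    · subst h2; rw [hqj]; simp [hne_ij.symm, h1, hB]; ring
    · rw [hqk k h1 h2]; simp [h1, h2]
  have hsum_eq : (∑ k : Fin nF, W * Real.logb 2 (q k * l * g * nstar k / (W * N₀))) =
      (∑ k : Fin nF, W * Real.logb 2 (pstar k * l * g * nstar k / (W * N₀))) + (A + B) := by
    rw [Finset.sum_congr rfl fun k _ => hterm k]
    simp only [Finset.sum_add_distrib, Finset.sum_ite_eq' Finset.univ,
      Finset.mem_univ, if_true]
  have hAB : 0 < A + B := by
    have hpi := hpos i
    have hpj := hpos j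
    have hlt : pstar i * pstar j < m * m := by
      have hd : pstar i - pstar j ≠ 0 := sub_ne_zero.mpr hij
      have := mul_self_pos.mpr hd
      rw [hm]; nlinarith
    have hlogs : Real.logb 2 (pstar i * pstar j) < Real.logb 2 (m * m) :=
      Real.logb_lt_logb h12 (mul_pos hpi hpj) hlt
    rw [Real.logb_mul (ne_of_gt hpi) (ne_of_gt hpj),
      Real.logb_mul (ne_of_gt hmpos) (ne_of_gt hmpos)] at hlogs
    rw [hA, hB]; nlinarith
  rw [hsum_eq] at hle
  linarith
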